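/- arXiv:1210.5364 — 3 statements merged into one kernel-verified Lean document; each statement's English description precedes it below -/
import Mathlib

section
/- With μ₁, μ₂ ∈ [0,1] and λ as in the previous construction, for every x ∈ [0,1] one has |(μ₁ − λμ₂ + λ x) − x| ≤ Δ(μ₁, μ₂), where Δ(μ₁, μ₂) := (1 − μ₁/μ₂)·𝟙{μ₁ < μ₂} + ((μ₁ − μ₂)/(1 − μ₂))·𝟙{μ₁ > μ₂}. -/
/-! In every case `Δ = 1 - λ` and the offset `μ₁ - λμ₂` equals `(1 - λ) t` with `t = 0` (if
`μ₁ < μ₂`) or `t = 1` (if `μ₁ ≥ μ₂`), so the quantity to bound is `(1 - λ)(t - x)` with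
`t, x ∈ [0,1]` and `λ ≤ 1`. -/

open Set

theorem abs_one_sub_mul_add_mul_sub_le {l t x : ℝ} (hl : l ≤ 1) (ht : t ∈ Icc (0 : ℝ) 1)
    (hx : x ∈ Icc (0 : ℝ) 1) : |(1 - l) * t + l * x - x| ≤ 1 - l := by
  have hdist : |t - x| ≤ 1 := abs_sub_le_iff.2 ⟨by linarith [ht.2, hx.1], by linarith [ht.1, hx.2]⟩
  calc |(1 - l) * t + l * x - x| = (1 - l) * |t - x| := by
        rw [show (1 - l) * t + l * x - x = (1 - l) * (t - x) by ring, abs_mul,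
          abs_of_nonneg (sub_nonneg.2 hl)]
    _ ≤ 1 - l := mul_le_of_le_one_right (sub_nonneg.2 hl) hdist

theorem stmt4_general (μ₁ μ₂ : ℝ) (h₁ : μ₁ ∈ Set.Icc (0:ℝ) 1)
    (lam Δ : ℝ)
    (hlam : lam = if μ₂ < μ₁ then (1 - μ₁) / (1 - μ₂)
      else if μ₁ < μ₂ then μ₁ / μ₂ else 1)
    (hΔ : Δ = if μ₁ < μ₂ then 1 - μ₁ / μ₂
      else if μ₂ < μ₁ then (μ₁ - μ₂) / (1 - μ₂) else 0) :
    ∀ x ∈ Set.Icc (0:ℝ) 1, |(μ₁ - lam * μ₂ + lam * x) - x| ≤ Δ := by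
  intro x hx
  suffices ∃ t ∈ Icc (0 : ℝ) 1, lam ≤ 1 ∧ μ₁ - lam * μ₂ = (1 - lam) * t ∧ Δ = 1 - lam by
    obtain ⟨t, ht, hl, hoffset, rfl⟩ := this
    simpa only [hoffset] using abs_one_sub_mul_add_mul_sub_le hl ht hx
  rcases lt_trichotomy μ₁ μ₂ with h | rfl | h
  · have hμ₂ : 0 < μ₂ := h₁.1.trans_lt h
    rw [hlam, hΔ, if_neg h.not_gt, if_pos h, if_pos h]
    exact ⟨0, left_mem_Icc.2 zero_le_one, (div_le_one hμ₂).2 h.le, by field_simp; ring, rfl⟩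
  · simp only [hlam, hΔ, lt_irrefl, if_false]
    exact ⟨0, left_mem_Icc.2 zero_le_one, by norm_num⟩
  · have hμ₂ : 0 < 1 - μ₂ := sub_pos.2 (h.trans_le h₁.2)
    rw [hlam, hΔ, if_pos h, if_neg h.not_gt, if_pos h]
    refine ⟨1, right_mem_Icc.2 zero_le_one, (div_le_one hμ₂).2 (by linarith), ?_, ?_⟩ <;>
      field_simp <;> ring

/-- With `μ₁, μ₂ ∈ [0,1]` and `λ` as before, for every `x ∈ [0,1]`,
`|(μ₁ - λμ₂ + λx) - x| ≤ Δ(μ₁,μ₂)` where `Δ` is defined casewise. -/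
theorem stmt4 (μ₁ μ₂ : ℝ) (h₁ : μ₁ ∈ Set.Icc (0:ℝ) 1) (h₂ : μ₂ ∈ Set.Icc (0:ℝ) 1)
    (lam Δ : ℝ)
    (hlam : lam = if μ₂ < μ₁ then (1 - μ₁) / (1 - μ₂)
      else if μ₁ < μ₂ then μ₁ / μ₂ else 1)
    (hΔ : Δ = if μ₁ < μ₂ then 1 - μ₁ / μ₂
      else if μ₂ < μ₁ then (μ₁ - μ₂) / (1 - μ₂) else 0) :
    ∀ x ∈ Set.Icc (0:ℝ) 1, |(μ₁ - lam * μ₂ + lam * x) - x| ≤ Δ :=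
  stmt4_general μ₁ μ₂ h₁ lam Δ hlam hΔ
end

section
/- Let Φ : [0,1] → ℝ be non-decreasing and left-continuous at 1. Then the convex envelope Φ̂ of Φ on [0,1] (the largest convex function below Φ) is continuous on the whole interval [0,1]. -/
/-!
The envelope is convex, so it is continuous on `(0,1)` and, lying below its chord from `0` to
`1`, upper semicontinuous at both endpoints. Lower semicontinuity at the endpoints comes from
convex minorants of `Φ`: at `0` the constant `Φ 0`, which minorizes `Φ` because `Φ` is
non-decreasing; at `1` the steep affine functions `c + K (x - 1)` with `c < Φ 1`, which lie below
`Φ` near `1` by left-continuity and below the lower bound `Φ 0` away from `1`.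
-/

/-- The convex envelope on `[0,1]`: the pointwise supremum of all convex functions on
`[0,1]` dominated by `f` there. -/
noncomputable def convEnvOn (f : ℝ → ℝ) (m : ℝ) : ℝ :=
  sSup {y : ℝ | ∃ h : ℝ → ℝ, ConvexOn ℝ (Set.Icc (0:ℝ) 1) h ∧
    (∀ x ∈ Set.Icc (0:ℝ) 1, h x ≤ f x) ∧ y = h m}

open Set Filter Topology

theorem upperSemicontinuousWithinAt_of_le_of_eq {g φ : ℝ → ℝ} {s : Set ℝ} {x : ℝ}
    (hφ : ContinuousWithinAt φ s x) (hle : ∀ z ∈ s, g z ≤ φ z) (heq : φ x = g x) :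
    UpperSemicontinuousWithinAt g s x := fun y hy => by
  filter_upwards [hφ.eventually_lt_const (heq.trans_lt hy), self_mem_nhdsWithin] with z hz hzs
  exact (hle z hzs).trans_lt hz

theorem ConvexOn.upperSemicontinuousWithinAt_Icc_zero_one {g : ℝ → ℝ}
    (hg : ConvexOn ℝ (Icc 0 1) g) {a : ℝ} (ha : a = 0 ∨ a = 1) :
    UpperSemicontinuousWithinAt g (Icc 0 1) a := by
  have hchord : ∀ z ∈ Icc (0 : ℝ) 1, g z ≤ (1 - z) * g 0 + z * g 1 := fun z hz => by
    simpa using hg.2 (left_mem_Icc.2 zero_le_one) (right_mem_Icc.2 zero_le_one)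
      (sub_nonneg.2 hz.2) hz.1 (sub_add_cancel 1 z)
  refine upperSemicontinuousWithinAt_of_le_of_eq (by fun_prop) hchord ?_
  rcases ha with rfl | rfl <;> simp

theorem exists_affine_le_of_eventually_lt {f : ℝ → ℝ} {c : ℝ} (hf : BddBelow (f '' Icc 0 1))
    (hc : ∀ᶠ x in 𝓝[Icc 0 1] 1, c < f x) :
    ∃ K, ∀ x ∈ Icc (0 : ℝ) 1, c + K * (x - 1) ≤ f x := by
  obtain ⟨B, hB⟩ := hf
  obtain ⟨δ, hδ, hnear⟩ := Metric.mem_nhdsWithin_iff.1 hc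
  have hK : 0 ≤ max 0 ((c - B) / δ) := le_max_left _ _
  refine ⟨max 0 ((c - B) / δ), fun x hx => ?_⟩
  by_cases hx1 : 1 - x < δ
  · have hdist : x ∈ Metric.ball 1 δ := by
      rw [Metric.mem_ball, Real.dist_eq, abs_sub_lt_iff]
      constructor <;> linarith [hx.2]
    have hcx : c < f x := hnear ⟨hdist, hx⟩
    nlinarith [hx.2]
  · have hKδ : c - B ≤ max 0 ((c - B) / δ) * δ :=
      (div_le_iff₀ hδ).1 (le_max_right _ _)
    have hBx : B ≤ f x := hB (mem_image_of_mem f hx)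
    nlinarith

section convEnvOn

variable {f h : ℝ → ℝ} {m : ℝ}

theorem ConvexOn.le_convEnvOn (hh : ConvexOn ℝ (Icc 0 1) h)
    (hhf : ∀ x ∈ Icc (0 : ℝ) 1, h x ≤ f x) (hm : m ∈ Icc (0 : ℝ) 1) : h m ≤ convEnvOn f m :=
  le_csSup ⟨f m, by rintro _ ⟨h', -, hh'f, rfl⟩; exact hh'f m hm⟩ ⟨h, hh, hhf, rfl⟩

theorem convEnvOn_le_of_forall_le (hf : BddBelow (f '' Icc 0 1)) {b : ℝ}
    (hb : ∀ h, ConvexOn ℝ (Icc 0 1) h → (∀ x ∈ Icc (0 : ℝ) 1, h x ≤ f x) → h m ≤ b) :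
    convEnvOn f m ≤ b := by
  obtain ⟨B, hB⟩ := hf
  have hconst : ∀ x ∈ Icc (0 : ℝ) 1, B ≤ f x := fun x hx => hB (mem_image_of_mem f hx)
  refine csSup_le ⟨B, fun _ => B, convexOn_const B (convex_Icc 0 1), hconst, rfl⟩ ?_
  rintro _ ⟨h, hh, hhf, rfl⟩
  exact hb h hh hhf

theorem convEnvOn_le (hf : BddBelow (f '' Icc 0 1)) (hm : m ∈ Icc (0 : ℝ) 1) :
    convEnvOn f m ≤ f m :=
  convEnvOn_le_of_forall_le hf fun _ _ hhf => hhf m hm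

theorem convexOn_convEnvOn (hf : BddBelow (f '' Icc 0 1)) :
    ConvexOn ℝ (Icc 0 1) (convEnvOn f) := by
  refine ⟨convex_Icc 0 1, fun x hx y hy a b ha hb hab => ?_⟩
  refine convEnvOn_le_of_forall_le hf fun h hh hhf => (hh.2 hx hy ha hb hab).trans ?_
  gcongr
  · exact hh.le_convEnvOn hhf hx
  · exact hh.le_convEnvOn hhf hy

theorem MonotoneOn.convEnvOn_zero_le (hf : MonotoneOn f (Icc 0 1)) (hm : m ∈ Icc (0 : ℝ) 1) :
    convEnvOn f 0 ≤ convEnvOn f m := by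
  have h0 : (0 : ℝ) ∈ Icc 0 1 := left_mem_Icc.2 zero_le_one
  calc convEnvOn f 0 ≤ f 0 := convEnvOn_le (hf.map_isLeast (isLeast_Icc zero_le_one)).bddBelow h0
    _ ≤ convEnvOn f m :=
      (convexOn_const (f 0) (convex_Icc 0 1)).le_convEnvOn (fun x hx => hf h0 hx hx.1) hm

theorem MonotoneOn.lowerSemicontinuousWithinAt_convEnvOn_zero (hf : MonotoneOn f (Icc 0 1)) :
    LowerSemicontinuousWithinAt (convEnvOn f) (Icc 0 1) 0 := fun _ hy =>
  eventually_nhdsWithin_of_forall fun _ hm => hy.trans_le (hf.convEnvOn_zero_le hm)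

theorem lowerSemicontinuousWithinAt_convEnvOn_one (hf : BddBelow (f '' Icc 0 1))
    (hlsc : LowerSemicontinuousWithinAt f (Icc 0 1) 1) :
    LowerSemicontinuousWithinAt (convEnvOn f) (Icc 0 1) 1 := by
  intro y hy
  obtain ⟨c, hyc, hcf⟩ :=
    exists_between (hy.trans_le (convEnvOn_le hf (right_mem_Icc.2 zero_le_one)))
  obtain ⟨K, hK⟩ := exists_affine_le_of_eventually_lt hf (hlsc c hcf)
  have hconv : ConvexOn ℝ (Icc 0 1) fun x => c + K * (x - 1) :=
    ((LinearMap.lsmul ℝ ℝ K).convexOn (convex_Icc 0 1)).add_const (c - K) |>.congr fun x _ => by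
      show K * x + (c - K) = c + K * (x - 1); ring
  have hlim : ContinuousWithinAt (fun x => c + K * (x - 1)) (Icc 0 1) 1 := by fun_prop
  filter_upwards [hlim.eventually_const_lt (by simpa using hyc), self_mem_nhdsWithin] with x hx hxs
  exact hx.trans_le (hconv.le_convEnvOn hK hxs)

end convEnvOn

theorem stmt6_general (Φ : ℝ → ℝ) (hmono : MonotoneOn Φ (Set.Icc 0 1))
    (hlc : ContinuousWithinAt Φ (Set.Iic 1) 1) :
    ContinuousOn (convEnvOn Φ) (Set.Icc 0 1) := by
  have hbdd : BddBelow (Φ '' Icc 0 1) := (hmono.map_isLeast (isLeast_Icc zero_le_one)).bddBelow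
  have hconv := convexOn_convEnvOn hbdd
  intro x hx
  rcases eq_endpoints_or_mem_Ioo_of_mem_Icc hx with rfl | rfl | hx'
  · exact continuousWithinAt_iff_lower_upperSemicontinuousWithinAt.2 ⟨
      hmono.lowerSemicontinuousWithinAt_convEnvOn_zero,
      hconv.upperSemicontinuousWithinAt_Icc_zero_one (.inl rfl)⟩
  · exact continuousWithinAt_iff_lower_upperSemicontinuousWithinAt.2 ⟨
      lowerSemicontinuousWithinAt_convEnvOn_one hbdd
      (hlc.mono Icc_subset_Iic_self).lowerSemicontinuousWithinAt,
      hconv.upperSemicontinuousWithinAt_Icc_zero_one (.inr rfl)⟩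
  · rw [← interior_Icc] at hx'
    exact (hconv.continuousOn_interior.continuousAt
      (isOpen_interior.mem_nhds hx')).continuousWithinAt

/-- The convex envelope of a non-decreasing bounded function `Φ` on `[0,1]`
that is left-continuous at `1` is continuous on the whole interval `[0,1]`. -/
theorem stmt6 (Φ : ℝ → ℝ) (hmono : MonotoneOn Φ (Set.Icc 0 1))
    (hbdd : ∃ C : ℝ, ∀ x ∈ Set.Icc (0:ℝ) 1, |Φ x| ≤ C)
    (hlc : ContinuousWithinAt Φ (Set.Iic 1) 1) :
    ContinuousOn (convEnvOn Φ) (Set.Icc 0 1) :=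
  stmt6_general Φ hmono hlc
end

section
/- Let (ξ_n) be a uniformly bounded sequence of random variables with values in [0,1]. Then there exist convex combinations ζ_n := Σ_{i≥n} λᵢⁿ ξᵢ (with λᵢⁿ ≥ 0, Σ_{i≥n} λᵢⁿ = 1, finitely many nonzero) and a random variable ζ with values in [0,1] such that ζ_n → ζ almost surely and in L². -/
/-!
Let `d n` be the distance from `0` to the set `A n` of convex combinations of the tail
`(x i)_{i ≥ n}` of a bounded sequence in a Hilbert space. The sets decrease, so `d n` increases
to a finite limit `D`. Pick `y n ∈ A n` with `‖y n‖ ≤ d n + 1/(n+1)`. For `N ≤ n, m` the midpoint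
of `y n` and `y m` lies in `A N`, so `‖y n + y m‖ ≥ 2 d N`, and the parallelogram law gives
`‖y n - y m‖² ≤ 4 ((D + 1/(N+1))² - d N²) → 0`: the `y n` form a Cauchy sequence.

Applied to `ξ n` in `L²`, this gives forward convex combinations converging in `L²`; a
subsequence of them (still forward) converges a.e., and the limit lies a.e. in `[0,1]`, so it can
be clamped to `[0,1]` without changing its class.
-/

open MeasureTheory Filter Metric Set Topology Finsupp

lemma Finsupp.finsum_smul_eq_sum_support {ι R M : Type*} [Semiring R] [AddCommMonoid M]
    [Module R M] (w : ι →₀ R) (z : ι → M) : ∑ᶠ i, w i • z i = ∑ i ∈ w.support, w i • z i :=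
  finsum_eq_sum_of_support_subset _ fun _ hi => mem_support_iff.2 (left_ne_zero_of_smul hi)

lemma Finsupp.finsum_eq_sum_support {ι M : Type*} [AddCommMonoid M] (w : ι →₀ M) :
    ∑ᶠ i, w i = ∑ i ∈ w.support, w i :=
  finsum_eq_sum_of_support_subset _ fun _ => mem_support_iff.2

/-- The weights `λⁿ` of a forward convex combination `∑_{i ≥ n} λⁿᵢ xᵢ`. -/
def forwardSimplex (n : ℕ) : Set (ℕ →₀ ℝ) :=
  {w | (∀ i, 0 ≤ w i) ∧ (∀ i < n, w i = 0) ∧ ∑ᶠ i, w i = 1}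

lemma forwardSimplex_antitone : Antitone forwardSimplex :=
  fun _ _ hnm _ ⟨hw₀, hw_lt, hw₁⟩ => ⟨hw₀, fun i hi => hw_lt i (hi.trans_le hnm), hw₁⟩

lemma single_mem_forwardSimplex (n : ℕ) : single n 1 ∈ forwardSimplex n := by
  refine ⟨fun i => ?_, fun i hi => single_eq_of_ne hi.ne, ?_⟩
  · rw [single_apply]; split_ifs <;> norm_num
  · rw [finsum_eq_sum_support]; exact sum_single_index (h := fun _ a => a) rfl

lemma convex_forwardSimplex (n : ℕ) : Convex ℝ (forwardSimplex n) := by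
  rintro v ⟨hv₀, hv_lt, hv₁⟩ u ⟨hu₀, hu_lt, hu₁⟩ a b ha hb hab
  refine ⟨fun i => ?_, fun i hi => ?_, ?_⟩
  · simp only [coe_add, coe_smul, Pi.add_apply, Pi.smul_apply, smul_eq_mul]
    exact add_nonneg (mul_nonneg ha (hv₀ i)) (mul_nonneg hb (hu₀ i))
  · simp [hv_lt i hi, hu_lt i hi]
  · simp only [coe_add, coe_smul, Pi.add_apply, Pi.smul_apply, smul_eq_mul]
    rw [finsum_add_distrib, ← mul_finsum, ← mul_finsum, hv₁, hu₁, mul_one, mul_one, hab]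
    all_goals fun_prop

lemma linearCombination_mem_convexHull {M : Type*} [AddCommGroup M] [Module ℝ M] (x : ℕ → M)
    {n : ℕ} {w : ℕ →₀ ℝ} (hw : w ∈ forwardSimplex n) :
    linearCombination ℝ x w ∈ convexHull ℝ (x '' Ici n) := by
  obtain ⟨hw₀, hw_lt, hw₁⟩ := hw
  rw [finsum_eq_sum_support] at hw₁
  rw [linearCombination_apply, Finsupp.sum, ← Finset.centerMass_eq_of_sum_1 _ _ hw₁]
  refine Finset.centerMass_mem_convexHull _ (fun i _ => hw₀ i) (hw₁ ▸ one_pos) fun i hi => ?_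
  exact mem_image_of_mem _ (not_lt.1 fun h => mem_support_iff.1 hi (hw_lt i h))

lemma Convex.finsum_smul_mem {M : Type*} [AddCommGroup M] [Module ℝ M] {s : Set M}
    (hs : Convex ℝ s) {n : ℕ} {w : ℕ →₀ ℝ} (hw : w ∈ forwardSimplex n) {z : ℕ → M}
    (hz : ∀ i, z i ∈ s) : ∑ᶠ i, w i • z i ∈ s := by
  obtain ⟨hw₀, -, hw₁⟩ := hw
  rw [finsum_eq_sum_support] at hw₁
  rw [finsum_smul_eq_sum_support]
  exact hs.sum_mem (fun i _ => hw₀ i) hw₁ fun i _ => hz i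

section InnerProductSpace

variable {E : Type*} [NormedAddCommGroup E] [InnerProductSpace ℝ E]

lemma norm_sub_sq_le_of_two_mul_le_norm_add {x y : E} {r δ : ℝ} (hx : ‖x‖ ≤ r) (hy : ‖y‖ ≤ r)
    (hδ : 0 ≤ δ) (hxy : 2 * δ ≤ ‖x + y‖) : ‖x - y‖ ^ 2 ≤ 4 * (r ^ 2 - δ ^ 2) := by
  have hx2 := pow_le_pow_left₀ (norm_nonneg x) hx 2
  have hy2 := pow_le_pow_left₀ (norm_nonneg y) hy 2
  have hxy2 := pow_le_pow_left₀ (by positivity) hxy 2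
  linarith [parallelogram_law_with_norm ℝ x y]

theorem exists_tendsto_of_antitone_convex [CompleteSpace E] {A : ℕ → Set E} (hA : Antitone A)
    (hconv : ∀ n, Convex ℝ (A n)) (hne : ∀ n, (A n).Nonempty)
    (hbdd : Bornology.IsBounded (A 0)) :
    ∃ y : ℕ → E, (∀ n, y n ∈ A n) ∧ ∃ g, Tendsto y atTop (𝓝 g) := by
  set d : ℕ → ℝ := fun n => infDist 0 (A n)
  have hd_le : ∀ n, ∀ x ∈ A n, d n ≤ ‖x‖ := fun n x hx => by
    simpa using infDist_le_dist_of_mem (x := 0) hx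
  obtain ⟨C, hC⟩ := isBounded_iff_forall_norm_le.1 hbdd
  have hd_bdd : BddAbove (range d) := ⟨C, forall_mem_range.2 fun n =>
    let ⟨x, hx⟩ := hne n; (hd_le n x hx).trans (hC x (hA (Nat.zero_le n) hx))⟩
  have hd_tendsto : Tendsto d atTop (𝓝 (⨆ n, d n)) :=
    tendsto_atTop_ciSup (fun n m h => infDist_le_infDist_of_subset (hA h) (hne m)) hd_bdd
  set D := ⨆ n, d n
  have hy : ∀ n : ℕ, ∃ y ∈ A n, ‖y‖ < d n + 1 / (n + 1) := fun n => by
    simpa using (infDist_lt_iff (hne n)).1 (lt_add_of_pos_right (d n) Nat.one_div_pos_of_nat)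
  choose y hyA hy using hy
  refine ⟨y, hyA, cauchySeq_tendsto_of_complete <| cauchySeq_of_le_tendsto_0
    (fun N : ℕ => √(4 * ((D + 1 / (N + 1)) ^ 2 - d N ^ 2))) (fun n m N hn hm => ?_) ?_⟩
  · have hr : ∀ k, N ≤ k → ‖y k‖ ≤ D + 1 / (N + 1) := fun k hk => by
      have : (1 : ℝ) / (k + 1) ≤ 1 / (N + 1) := Nat.one_div_le_one_div hk
      linarith [hy k, le_ciSup hd_bdd k]
    have hmid : d N ≤ ‖(1 / 2 : ℝ) • (y n + y m)‖ := by
      refine hd_le N _ ?_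
      rw [smul_add]
      exact hconv N (hA hn (hyA n)) (hA hm (hyA m)) (by norm_num) (by norm_num) (by norm_num)
    rw [norm_smul, Real.norm_of_nonneg (by norm_num)] at hmid
    rw [dist_eq_norm]
    exact Real.le_sqrt_of_sq_le <| norm_sub_sq_le_of_two_mul_le_norm_add (hr n hn) (hr m hm)
      infDist_nonneg (by linarith)
  · have h := ((((tendsto_const_nhds (x := D)).add tendsto_one_div_add_atTop_nhds_zero_nat).pow
      2).sub (hd_tendsto.pow 2)).const_mul 4 |>.sqrt
    simpa using h

theorem exists_forwardSimplex_tendsto_linearCombination [CompleteSpace E] {x : ℕ → E}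
    (hx : Bornology.IsBounded (range x)) :
    ∃ w : ℕ → ℕ →₀ ℝ, (∀ n, w n ∈ forwardSimplex n) ∧
      ∃ g, Tendsto (fun n => linearCombination ℝ x (w n)) atTop (𝓝 g) := by
  have hbdd : Bornology.IsBounded (linearCombination ℝ x '' forwardSimplex 0) := by
    refine (isBounded_convexHull.2 hx).subset ?_
    rintro _ ⟨w, hw, rfl⟩
    exact convexHull_mono (image_subset_range _ _) (linearCombination_mem_convexHull x hw)
  obtain ⟨y, hy, g, hg⟩ := exists_tendsto_of_antitone_convex
    (fun _ _ h => image_mono (forwardSimplex_antitone h))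
    (fun n => (convex_forwardSimplex n).linear_image _)
    (fun n => ⟨_, mem_image_of_mem _ (single_mem_forwardSimplex n)⟩) hbdd
  choose w hw hwy using hy
  exact ⟨w, hw, g, by simpa only [hwy] using hg⟩

end InnerProductSpace

lemma MeasureTheory.Lp.coeFn_linearCombination {α ι E : Type*} [MeasurableSpace α]
    {μ : Measure α} {p : ENNReal} [NormedAddCommGroup E] [NormedSpace ℝ E]
    {F : ι → Lp E p μ} {f : ι → α → E} (hF : ∀ i, F i =ᵐ[μ] f i) (w : ι →₀ ℝ) :
    ⇑(linearCombination ℝ F w) =ᵐ[μ] fun a => ∑ᶠ i, w i • f i a := by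
  have hterm : ∀ᵐ a ∂μ, ∀ i ∈ w.support, (w i • F i) a = w i • f i a :=
    (eventually_all_finset _).2 fun i _ => by
      filter_upwards [Lp.coeFn_smul (w i) (F i), hF i] with a h1 h2
      rw [h1, Pi.smul_apply, h2]
  filter_upwards [Lp.coeFn_fun_finsetSum w.support fun i => w i • F i, hterm] with a hsum hterm
  rw [linearCombination_apply, Finsupp.sum, hsum, finsum_smul_eq_sum_support]
  exact Finset.sum_congr rfl hterm

theorem MeasureTheory.exists_forwardSimplex_tendsto_ae_and_eLpNorm {Ω E : Type*}
    [MeasurableSpace Ω] {μ : Measure Ω} [NormedAddCommGroup E] [InnerProductSpace ℝ E]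
    [CompleteSpace E] {f : ℕ → Ω → E} (hf : ∀ n, MemLp (f n) 2 μ) {C : NNReal}
    (hC : ∀ n, eLpNorm (f n) 2 μ ≤ C) :
    ∃ (w : ℕ → ℕ →₀ ℝ) (g : Ω → E), (∀ n, w n ∈ forwardSimplex n) ∧
      (∀ᵐ ω ∂μ, Tendsto (fun n => ∑ᶠ i, w n i • f i ω) atTop (𝓝 (g ω))) ∧
      Tendsto (fun n => eLpNorm (fun ω => ∑ᶠ i, w n i • f i ω - g ω) 2 μ) atTop (𝓝 0) := by
  set F : ℕ → Lp E 2 μ := fun n => (hf n).toLp (f n)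
  have hF : Bornology.IsBounded (range F) := isBounded_iff_forall_norm_le.2 ⟨C,
    forall_mem_range.2 fun n => by
      rw [Lp.norm_toLp]; exact ENNReal.toReal_le_of_le_ofReal C.2 (by simpa using hC n)⟩
  obtain ⟨w, hw, g, hg⟩ := exists_forwardSimplex_tendsto_linearCombination hF
  have hZ : ∀ n, ⇑(linearCombination ℝ F (w n)) =ᵐ[μ] fun ω => ∑ᶠ i, w n i • f i ω :=
    fun n => Lp.coeFn_linearCombination (fun i => (hf i).coeFn_toLp) (w n)
  obtain ⟨φ, hφ, hφ_ae⟩ := (tendstoInMeasure_of_tendsto_Lp hg).exists_seq_tendsto_ae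
  refine ⟨fun n => w (φ n), g, fun n => forwardSimplex_antitone (hφ.id_le n) (hw (φ n)), ?_, ?_⟩
  · filter_upwards [hφ_ae, ae_all_iff.2 fun n => hZ (φ n)] with ω hω hZω
    simpa only [hZω] using hω
  · refine ((Lp.tendsto_Lp_iff_tendsto_eLpNorm' _ _).1 (hg.comp hφ.tendsto_atTop)).congr
      fun n => eLpNorm_congr_ae ?_
    filter_upwards [hZ (φ n)] with ω hω
    simp [hω]

/-- Given a sequence of `[0,1]`-valued random variables, there exist forward
convex combinations `ζ_n = Σ_{i≥n} λᵢⁿ ξᵢ` (finitely many nonzero weights) converging a.s.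
and in `L²` to some `[0,1]`-valued random variable `ζ`. -/
theorem stmt17 {Ω : Type*} [MeasurableSpace Ω] (P : Measure Ω) [IsProbabilityMeasure P]
    (ξ : ℕ → Ω → ℝ) (hmeas : ∀ n, Measurable (ξ n))
    (hξ : ∀ n ω, ξ n ω ∈ Set.Icc (0:ℝ) 1) :
    ∃ (lam : ℕ → ℕ → ℝ) (ζ : Ω → ℝ),
      (∀ n i, 0 ≤ lam n i) ∧
      (∀ n i, i < n → lam n i = 0) ∧
      (∀ n, (Function.support (lam n)).Finite) ∧
      (∀ n, ∑ᶠ i, lam n i = 1) ∧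
      (∀ ω, ζ ω ∈ Set.Icc (0:ℝ) 1) ∧
      (∀ᵐ ω ∂P, Tendsto (fun n => ∑ᶠ i, lam n i * ξ i ω) atTop (nhds (ζ ω))) ∧
      Tendsto (fun n => eLpNorm (fun ω => (∑ᶠ i, lam n i * ξ i ω) - ζ ω) 2 P)
        atTop (nhds 0) := by
  have hξ_le : ∀ n ω, ‖ξ n ω‖ ≤ 1 := fun n ω => by
    rw [Real.norm_of_nonneg (hξ n ω).1]; exact (hξ n ω).2
  obtain ⟨w, g, hw, hae, hL2⟩ := exists_forwardSimplex_tendsto_ae_and_eLpNorm (C := 1)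
    (fun n => MemLp.of_bound (hmeas n).aestronglyMeasurable 1 (.of_forall (hξ_le n)))
    (fun n => by simpa using eLpNorm_le_of_ae_bound (p := 2) (μ := P) (.of_forall (hξ_le n)))
  have hg : ∀ᵐ ω ∂P, g ω ∈ Icc (0 : ℝ) 1 := by
    filter_upwards [hae] with ω hω
    exact isClosed_Icc.mem_of_tendsto hω
      (.of_forall fun n => (convex_Icc 0 1).finsum_smul_mem (hw n) (hξ · ω))
  set ζ : Ω → ℝ := fun ω => projIcc 0 1 zero_le_one (g ω)
  have hgζ : g =ᵐ[P] ζ := by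
    filter_upwards [hg] with ω hω
    simp [ζ, projIcc_of_mem _ hω]
  refine ⟨fun n i => w n i, ζ, fun n => (hw n).1, fun n => (hw n).2.1,
    fun n => (w n).hasFiniteSupport, fun n => (hw n).2.2, fun ω => (projIcc 0 1 zero_le_one (g ω)).2, ?_, ?_⟩
  · filter_upwards [hae, hgζ] with ω hω hgω
    simpa only [← hgω, smul_eq_mul] using hω
  · refine hL2.congr fun n => eLpNorm_congr_ae ?_
    filter_upwards [hgζ] with ω hω
    simp [hω]
end
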